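/- arXiv:1706.03082 — 6 statements merged into one kernel-verified Lean document; each statement's English description precedes it below -/
import Mathlib

section
/- Let γ, A ∈ B(H) satisfy γ² = γ, γ* = γ, A* = A, γ A γ = 0 and (1 − γ) A (1 − γ) = 0. Set B := A γ − γ A. Then B* = −B, and the curve γ_t := exp(tB) ∘ γ ∘ exp(−tB) (operator exponential in the Banach algebra B(H)) satisfies: γ_t² = γ_t and γ_t* = γ_t for all t ∈ ℝ, γ_0 = γ, and t ↦ γ_t is differentiable at t = 0 in operator norm with derivative A. -/
/-!
`B = Aγ − γA` is skew-adjoint, being the commutator of two self-adjoint operators, so `exp(tB)`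
is unitary with adjoint `exp(−tB)` and `γ_t` is a unitary conjugate of the projection `γ`.
The derivative of `γ_t` at `0` is `Bγ − γB`, which equals `A` because the conditions on `A`
say that it is off-diagonal with respect to `γ`, i.e. `A = γA + Aγ`.
-/

open NormedSpace

/-- The curve `t ↦ exp(tB) γ exp(−tB)` in the Banach algebra `B(H)`. -/
noncomputable def projCurve {H : Type*} [NormedAddCommGroup H] [InnerProductSpace ℂ H]
    [CompleteSpace H] (γ B : H →L[ℂ] H) (t : ℝ) : H →L[ℂ] H :=
  NormedSpace.exp (t • B) * γ * NormedSpace.exp (-(t • B))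

lemma IsSelfAdjoint.mul_sub_mul_mem_skewAdjoint {R : Type*} [Ring R] [StarRing R] {a b : R}
    (ha : IsSelfAdjoint a) (hb : IsSelfAdjoint b) : a * b - b * a ∈ skewAdjoint R := by
  rw [skewAdjoint.mem_iff, star_sub, star_mul, star_mul, ha.star_eq, hb.star_eq, neg_sub]

lemma IsStarProjection.conjugate_of_mem_unitary {R : Type*} [Monoid R] [StarMul R] {p u : R}
    (hp : IsStarProjection p) (hu : u ∈ unitary R) : IsStarProjection (u * p * star u) where
  isIdempotentElem := by
    rw [IsIdempotentElem]
    calc u * p * star u * (u * p * star u) = u * (p * (star u * u) * p) * star u := by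
          simp only [mul_assoc]
      _ = u * p * star u := by rw [Unitary.star_mul_self_of_mem hu, mul_one, hp.isIdempotentElem.eq]
  isSelfAdjoint := hp.isSelfAdjoint.conjugate u

lemma IsIdempotentElem.commutator_commutator_eq_of_offDiagonal {R : Type*} [Ring R] {p a : R}
    (hp : IsIdempotentElem p) (h₁ : p * a * p = 0) (h₂ : (1 - p) * a * (1 - p) = 0) :
    (a * p - p * a) * p - p * (a * p - p * a) = a := by
  have hsplit : a = p * a + a * p := by
    have : (1 - p) * a * (1 - p) = a - (p * a + a * p) + p * a * p := by noncomm_ring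
    rwa [h₂, h₁, add_zero, eq_comm, sub_eq_zero] at this
  calc (a * p - p * a) * p - p * (a * p - p * a)
      = a * (p * p) + (p * p) * a - (p * a * p + p * a * p) := by noncomm_ring
    _ = a := by rw [hp.eq, h₁, add_zero, sub_zero, add_comm, ← hsplit]

section ConjugationCurve

variable {𝔸 : Type*} [NormedRing 𝔸] [NormedAlgebra ℝ 𝔸] [CompleteSpace 𝔸]

lemma hasDerivAt_exp_smul_mul_mul_exp_neg_smul (b p : 𝔸) (t : ℝ) :
    HasDerivAt (fun s : ℝ => exp (s • b) * p * exp (-(s • b)))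
      (exp (t • b) * (b * p - p * b) * exp (-(t • b))) t := by
  have hneg : HasDerivAt (fun s : ℝ => exp (-(s • b))) (-b * exp (-(t • b))) t := by
    simpa only [smul_neg] using hasDerivAt_exp_smul_const' (-b) t
  refine (((hasDerivAt_exp_smul_const b t).mul_const p).mul hneg).congr_deriv ?_
  noncomm_ring

lemma isStarProjection_exp_smul_mul_mul_exp_neg_smul [StarRing 𝔸] [ContinuousStar 𝔸]
    [StarModule ℝ 𝔸] {b p : 𝔸} (hb : b ∈ skewAdjoint 𝔸) (hp : IsStarProjection p) (t : ℝ) :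
    IsStarProjection (exp (t • b) * p * exp (-(t • b))) := by
  let +nondep : NormedAlgebra ℚ 𝔸 := .restrictScalars ℚ ℝ 𝔸
  have htb : t • b ∈ skewAdjoint 𝔸 := skewAdjoint.smul_mem t hb
  have hstar : star (exp (t • b)) = exp (-(t • b)) := by
    rw [star_exp, skewAdjoint.mem_iff.mp htb]
  rw [← hstar]
  exact hp.conjugate_of_mem_unitary (exp_mem_unitary_of_mem_skewAdjoint htb)

end ConjugationCurve

/-- Let `γ, A ∈ B(H)` satisfy `γ² = γ`, `γ* = γ`, `A* = A`, `γAγ = 0` and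
`(1 − γ)A(1 − γ) = 0`.  Set `B := Aγ − γA`.  Then `B* = −B`, and the curve
`γ_t := exp(tB) γ exp(−tB)` consists of self-adjoint idempotents, starts at `γ`, and is
differentiable at `t = 0` (in operator norm) with derivative `A`. -/
theorem stmt1 {H : Type*} [NormedAddCommGroup H] [InnerProductSpace ℂ H] [CompleteSpace H]
    (γ A : H →L[ℂ] H)
    (hidem : γ * γ = γ)
    (hsa : ContinuousLinearMap.adjoint γ = γ)
    (hAsa : ContinuousLinearMap.adjoint A = A)
    (h1 : γ * A * γ = 0)
    (h2 : (1 - γ) * A * (1 - γ) = 0) :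
    ContinuousLinearMap.adjoint (A * γ - γ * A) = -(A * γ - γ * A) ∧
    (∀ t : ℝ, projCurve γ (A * γ - γ * A) t * projCurve γ (A * γ - γ * A) t
        = projCurve γ (A * γ - γ * A) t) ∧
    (∀ t : ℝ, ContinuousLinearMap.adjoint (projCurve γ (A * γ - γ * A) t)
        = projCurve γ (A * γ - γ * A) t) ∧
    projCurve γ (A * γ - γ * A) 0 = γ ∧
    HasDerivAt (projCurve γ (A * γ - γ * A)) A 0 := by
  have hγ : IsStarProjection γ :=
    ⟨hidem, ContinuousLinearMap.isSelfAdjoint_iff'.mpr hsa⟩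
  have hB : A * γ - γ * A ∈ skewAdjoint (H →L[ℂ] H) :=
    (ContinuousLinearMap.isSelfAdjoint_iff'.mpr hAsa).mul_sub_mul_mem_skewAdjoint hγ.isSelfAdjoint
  have hcurve := isStarProjection_exp_smul_mul_mul_exp_neg_smul hB hγ
  refine ⟨?_, fun t => (hcurve t).isIdempotentElem.eq,
    fun t => ContinuousLinearMap.isSelfAdjoint_iff'.mp (hcurve t).isSelfAdjoint, ?_, ?_⟩
  · rw [← ContinuousLinearMap.star_eq_adjoint]
    exact skewAdjoint.mem_iff.mp hB
  · simp [projCurve]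
  · have hderiv := hasDerivAt_exp_smul_mul_mul_exp_neg_smul (A * γ - γ * A) γ 0
    rwa [zero_smul, neg_zero, exp_zero, one_mul, mul_one,
      hγ.isIdempotentElem.commutator_commutator_eq_of_offDiagonal h1 h2] at hderiv
end

section
/- Let Γ ∈ B(K) satisfy Γ² = Γ and Γ + 𝒥Γ𝒥 = 1, and define P_aux(Ξ) := Γ Ξ (1 − Γ) + (1 − Γ) Ξ Γ and P(Ξ) := (1/2)(P_aux(Ξ) − 𝒥 P_aux(Ξ) 𝒥). Then: (i) P(P(Ξ)) = P(Ξ) for all Ξ ∈ B(K); (ii) P(Ξ) = Ξ if and only if Γ Ξ Γ = 0, (1 − Γ) Ξ (1 − Γ) = 0 and Ξ + 𝒥Ξ𝒥 = 0; (iii) if Ξ + 𝒥Ξ𝒥 = 0, then P(Ξ) = P_aux(Ξ). -/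
open scoped InnerProductSpace

/-- The element `(f, g)` of the Hilbert space direct sum `K = H ⊕ H`. -/
noncomputable def mkK {H : Type*} (f g : H) : WithLp 2 (H × H) :=
  (WithLp.equiv 2 (H × H)).symm (f, g)

/-- The conjugate-linear involution `𝒥(f, g) = (J g, J f)` on `K = H ⊕ H`. -/
noncomputable def JK {H : Type*} (J : H → H) (x : WithLp 2 (H × H)) : WithLp 2 (H × H) :=
  mkK (J ((WithLp.equiv 2 (H × H)) x).2) (J ((WithLp.equiv 2 (H × H)) x).1)

/-!
Write `Q = 1 - Γ` and `σ Ξ = 𝒥Ξ𝒥`, a conjugate-linear involutive ring automorphism of `B(K)`.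
`P_aux` takes the off-diagonal part of `Ξ` in the decomposition `K = ran Γ ⊕ ran Q`; it is a
projection whose fixed points are the `Ξ` with `ΓΞΓ = 0 = QΞQ`. The map `Ξ ↦ ½(Ξ - σ Ξ)` is the
projection onto the `σ`-odd operators. Since `Γ + σ Γ = 1`, `σ` swaps `Γ` and `Q`; the
off-diagonal part is symmetric in `Γ ↔ Q`, so the two projections commute, and
`P` is their composite. All three claims are then statements about commuting idempotent maps.
-/

section OffDiagPart

variable {R : Type*} [Ring R]

def offDiagPart (Γ X : R) : R := Γ * X * (1 - Γ) + (1 - Γ) * X * Γ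

theorem offDiagPart_one_sub (Γ X : R) : offDiagPart (1 - Γ) X = offDiagPart Γ X := by
  rw [offDiagPart, offDiagPart, sub_sub_cancel, add_comm]

theorem map_offDiagPart {S : Type*} [Ring S] (f : R →+* S) (Γ X : R) :
    f (offDiagPart Γ X) = offDiagPart (f Γ) (f X) := by
  simp only [offDiagPart, map_add, map_mul, map_sub, map_one]

theorem offDiagPart_sub (Γ X Y : R) :
    offDiagPart Γ (X - Y) = offDiagPart Γ X - offDiagPart Γ Y := by
  simp only [offDiagPart, mul_sub, sub_mul]; abel

theorem offDiagPart_smul {𝕜 : Type*} [CommSemiring 𝕜] [Algebra 𝕜 R] (c : 𝕜) (Γ X : R) :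
    offDiagPart Γ (c • X) = c • offDiagPart Γ X := by
  simp only [offDiagPart, mul_smul_comm, smul_mul_assoc, smul_add]

theorem offDiagPart_eq_sub (Γ X : R) :
    offDiagPart Γ X = X - Γ * X * Γ - (1 - Γ) * X * (1 - Γ) := by
  simp only [offDiagPart]; noncomm_ring

theorem IsIdempotentElem.mul_offDiagPart_mul_self {Γ : R} (hΓ : IsIdempotentElem Γ) (X : R) :
    Γ * offDiagPart Γ X * Γ = 0 := by
  have h₁ := hΓ.mul_one_sub_self
  have h₂ := hΓ.one_sub_mul_self
  calc Γ * offDiagPart Γ X * Γ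
      = Γ * (Γ * X) * ((1 - Γ) * Γ) + (Γ * (1 - Γ)) * X * (Γ * Γ) := by
        simp only [offDiagPart]; noncomm_ring
    _ = 0 := by rw [h₁, h₂, mul_zero, zero_mul, zero_mul, add_zero]

theorem IsIdempotentElem.one_sub_mul_offDiagPart_mul_one_sub {Γ : R} (hΓ : IsIdempotentElem Γ)
    (X : R) :
    (1 - Γ) * offDiagPart Γ X * (1 - Γ) = 0 := by
  rw [← offDiagPart_one_sub]; exact hΓ.one_sub.mul_offDiagPart_mul_self X

theorem IsIdempotentElem.offDiagPart_eq_self_iff {Γ : R} (hΓ : IsIdempotentElem Γ) (X : R) :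
    offDiagPart Γ X = X ↔ Γ * X * Γ = 0 ∧ (1 - Γ) * X * (1 - Γ) = 0 := by
  constructor
  · intro h
    rw [← h]
    exact ⟨hΓ.mul_offDiagPart_mul_self X, hΓ.one_sub_mul_offDiagPart_mul_one_sub X⟩
  · rintro ⟨h₁, h₂⟩
    rw [offDiagPart_eq_sub, h₁, h₂, sub_zero, sub_zero]

theorem IsIdempotentElem.offDiagPart_offDiagPart {Γ : R} (hΓ : IsIdempotentElem Γ) (X : R) :
    offDiagPart Γ (offDiagPart Γ X) = offDiagPart Γ X :=
  (hΓ.offDiagPart_eq_self_iff _).2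
    ⟨hΓ.mul_offDiagPart_mul_self X, hΓ.one_sub_mul_offDiagPart_mul_one_sub X⟩

end OffDiagPart

section SkewPart

variable {𝕜 R : Type*} [RCLike 𝕜] [Ring R] [Algebra 𝕜 R] {σ : R →+* R} {Γ : R}

variable (𝕜) in
def skewPart (σ : R →+* R) (X : R) : R := (2⁻¹ : 𝕜) • (X - σ X)

theorem skewPart_eq_self_of_add_eq_zero {X : R} (hX : X + σ X = 0) : skewPart 𝕜 σ X = X := by
  rw [skewPart, eq_neg_of_add_eq_zero_right hX, sub_neg_eq_add, ← two_smul 𝕜 X, smul_smul,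
    inv_mul_cancel₀ two_ne_zero, one_smul]

theorem skewPart_add_map_skewPart (hσσ : ∀ X, σ (σ X) = X)
    (hσsmul : ∀ (c : 𝕜) X, σ (c • X) = starRingEnd 𝕜 c • σ X) (X : R) :
    skewPart 𝕜 σ X + σ (skewPart 𝕜 σ X) = 0 := by
  rw [skewPart, hσsmul, map_inv₀, map_ofNat, map_sub, hσσ, ← smul_add, sub_add_sub_cancel',
    sub_self, smul_zero]

theorem offDiagPart_skewPart (hΓ : σ Γ = 1 - Γ) (X : R) :
    offDiagPart Γ (skewPart 𝕜 σ X) = skewPart 𝕜 σ (offDiagPart Γ X) := by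
  rw [skewPart, skewPart, offDiagPart_smul, offDiagPart_sub, map_offDiagPart, hΓ,
    offDiagPart_one_sub]

theorem skewPart_offDiagPart_of_add_eq_zero (hΓ : σ Γ = 1 - Γ) {X : R} (hX : X + σ X = 0) :
    skewPart 𝕜 σ (offDiagPart Γ X) = offDiagPart Γ X := by
  rw [← offDiagPart_skewPart hΓ, skewPart_eq_self_of_add_eq_zero hX]

theorem offDiagPart_skewPart_offDiagPart (hΓ : σ Γ = 1 - Γ) (hΓi : IsIdempotentElem Γ)
    (X : R) :
    offDiagPart Γ (skewPart 𝕜 σ (offDiagPart Γ X)) = skewPart 𝕜 σ (offDiagPart Γ X) := by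
  rw [offDiagPart_skewPart hΓ, hΓi.offDiagPart_offDiagPart]

theorem skewPart_offDiagPart_idem (hσσ : ∀ X, σ (σ X) = X)
    (hσsmul : ∀ (c : 𝕜) X, σ (c • X) = starRingEnd 𝕜 c • σ X) (hΓ : σ Γ = 1 - Γ)
    (hΓi : IsIdempotentElem Γ) (X : R) :
    skewPart 𝕜 σ (offDiagPart Γ (skewPart 𝕜 σ (offDiagPart Γ X))) =
      skewPart 𝕜 σ (offDiagPart Γ X) := by
  rw [offDiagPart_skewPart_offDiagPart hΓ hΓi,
    skewPart_eq_self_of_add_eq_zero (skewPart_add_map_skewPart hσσ hσsmul _)]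

theorem skewPart_offDiagPart_eq_self_iff (hσσ : ∀ X, σ (σ X) = X)
    (hσsmul : ∀ (c : 𝕜) X, σ (c • X) = starRingEnd 𝕜 c • σ X) (hΓ : σ Γ = 1 - Γ)
    (hΓi : IsIdempotentElem Γ) (X : R) :
    skewPart 𝕜 σ (offDiagPart Γ X) = X ↔
      Γ * X * Γ = 0 ∧ (1 - Γ) * X * (1 - Γ) = 0 ∧ X + σ X = 0 := by
  rw [← and_rotate]
  constructor
  · intro hX
    have hanti : X + σ X = 0 := hX ▸ skewPart_add_map_skewPart hσσ hσsmul _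
    refine ⟨hanti, (hΓi.offDiagPart_eq_self_iff X).1 ?_⟩
    conv_lhs => rw [← hX]
    rw [offDiagPart_skewPart_offDiagPart hΓ hΓi, hX]
  · rintro ⟨hanti, hdiag⟩
    rw [skewPart_offDiagPart_of_add_eq_zero hΓ hanti, (hΓi.offDiagPart_eq_self_iff X).2 hdiag]

end SkewPart

section ConjugationOperator

variable {𝕜 E : Type*} [RCLike 𝕜] [NormedAddCommGroup E] [NormedSpace 𝕜 E] {j : E → E}
  {Jop : (E →L[𝕜] E) → (E →L[𝕜] E)}

theorem conjOp_mul (hJop : ∀ A x, Jop A x = j (A (j x))) (hj : Function.Involutive j)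
    (A B : E →L[𝕜] E) : Jop (A * B) = Jop A * Jop B := by
  ext x; simp [hJop, hj _]

theorem conjOp_one (hJop : ∀ A x, Jop A x = j (A (j x))) (hj : Function.Involutive j) :
    Jop 1 = 1 := by
  ext x; simp [hJop, hj _]

theorem conjOp_add (hJop : ∀ A x, Jop A x = j (A (j x))) (hjadd : ∀ x y, j (x + y) = j x + j y)
    (A B : E →L[𝕜] E) : Jop (A + B) = Jop A + Jop B := by
  ext x; simp [hJop, hjadd]

theorem conjOp_conjOp (hJop : ∀ A x, Jop A x = j (A (j x))) (hj : Function.Involutive j)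
    (A : E →L[𝕜] E) : Jop (Jop A) = A := by
  ext x; simp [hJop, hj _]

theorem conjOp_smul (hJop : ∀ A x, Jop A x = j (A (j x)))
    (hjsmul : ∀ (c : 𝕜) x, j (c • x) = starRingEnd 𝕜 c • j x) (c : 𝕜) (A : E →L[𝕜] E) :
    Jop (c • A) = starRingEnd 𝕜 c • Jop A := by
  ext x; simp [hJop, hjsmul]

def conjOpRingHom (hJop : ∀ A x, Jop A x = j (A (j x))) (hj : Function.Involutive j)
    (hjadd : ∀ x y, j (x + y) = j x + j y) : (E →L[𝕜] E) →+* (E →L[𝕜] E) :=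
  RingHom.mk' ⟨⟨Jop, conjOp_one hJop hj⟩, conjOp_mul hJop hj⟩ (conjOp_add hJop hjadd)

end ConjugationOperator

section DirectSumConjugation

variable {H : Type*} {J : H → H}

theorem JK_involutive (hJ : Function.Involutive J) : Function.Involutive (JK J) := by
  intro x
  simp only [JK, mkK, WithLp.equiv_apply, WithLp.equiv_symm_apply, hJ _]

theorem JK_add [AddCommGroup H] (hJadd : ∀ f g, J (f + g) = J f + J g)
    (x y : WithLp 2 (H × H)) :
    JK J (x + y) = JK J x + JK J y := by
  apply (WithLp.equiv 2 _).injective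
  simp [JK, mkK, hJadd]

theorem JK_smul [AddCommGroup H] [Module ℂ H]
    (hJsmul : ∀ (c : ℂ) f, J (c • f) = starRingEnd ℂ c • J f) (c : ℂ) (x : WithLp 2 (H × H)) :
    JK J (c • x) = starRingEnd ℂ c • JK J x := by
  apply (WithLp.equiv 2 _).injective
  simp [JK, mkK, hJsmul]

end DirectSumConjugation

theorem stmt8_general {H : Type*} [NormedAddCommGroup H] [InnerProductSpace ℂ H]
    (J : H → H)
    (hJinv : ∀ f : H, J (J f) = f)
    (hJadd : ∀ f g : H, J (f + g) = J f + J g)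
    (hJsmul : ∀ (c : ℂ) (f : H), J (c • f) = (starRingEnd ℂ) c • J f)
    (Jop : (WithLp 2 (H × H) →L[ℂ] WithLp 2 (H × H)) →
      (WithLp 2 (H × H) →L[ℂ] WithLp 2 (H × H)))
    (hJop : ∀ (Ξ : WithLp 2 (H × H) →L[ℂ] WithLp 2 (H × H)) (x : WithLp 2 (H × H)),
      Jop Ξ x = JK J (Ξ (JK J x)))
    (Γ : WithLp 2 (H × H) →L[ℂ] WithLp 2 (H × H))
    (hidem : Γ * Γ = Γ)
    (hblock : Γ + Jop Γ = 1)
    (Paux P : (WithLp 2 (H × H) →L[ℂ] WithLp 2 (H × H)) →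
      (WithLp 2 (H × H) →L[ℂ] WithLp 2 (H × H)))
    (hPaux : ∀ Ξ : WithLp 2 (H × H) →L[ℂ] WithLp 2 (H × H),
      Paux Ξ = Γ * Ξ * (1 - Γ) + (1 - Γ) * Ξ * Γ)
    (hP : ∀ Ξ : WithLp 2 (H × H) →L[ℂ] WithLp 2 (H × H),
      P Ξ = (2⁻¹ : ℂ) • (Paux Ξ - Jop (Paux Ξ))) :
    (∀ Ξ : WithLp 2 (H × H) →L[ℂ] WithLp 2 (H × H), P (P Ξ) = P Ξ) ∧
    (∀ Ξ : WithLp 2 (H × H) →L[ℂ] WithLp 2 (H × H),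
      P Ξ = Ξ ↔ (Γ * Ξ * Γ = 0 ∧ (1 - Γ) * Ξ * (1 - Γ) = 0 ∧ Ξ + Jop Ξ = 0)) ∧
    (∀ Ξ : WithLp 2 (H × H) →L[ℂ] WithLp 2 (H × H), Ξ + Jop Ξ = 0 → P Ξ = Paux Ξ) := by
  have hJK := JK_involutive hJinv
  let σ := conjOpRingHom hJop hJK (JK_add hJadd)
  have hσσ : ∀ A, σ (σ A) = A := conjOp_conjOp hJop hJK
  have hσsmul : ∀ (c : ℂ) A, σ (c • A) = starRingEnd ℂ c • σ A :=
    conjOp_smul hJop (JK_smul hJsmul)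
  have hσΓ : σ Γ = 1 - Γ := eq_sub_of_add_eq' hblock
  obtain rfl : Paux = offDiagPart Γ := funext hPaux
  obtain rfl : P = fun Ξ ↦ skewPart ℂ σ (offDiagPart Γ Ξ) := funext hP
  exact ⟨skewPart_offDiagPart_idem hσσ hσsmul hσΓ hidem,
    skewPart_offDiagPart_eq_self_iff hσσ hσsmul hσΓ hidem,
    fun Ξ ↦ skewPart_offDiagPart_of_add_eq_zero hσΓ⟩

/-- Let `Γ ∈ B(K)` satisfy `Γ² = Γ` and `Γ + 𝒥Γ𝒥 = 1`, and define
`P_aux(Ξ) := Γ Ξ (1 − Γ) + (1 − Γ) Ξ Γ` and `P(Ξ) := (1/2)(P_aux(Ξ) − 𝒥 P_aux(Ξ) 𝒥)`.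
Then: (i) `P` is idempotent; (ii) `P(Ξ) = Ξ` iff `Γ Ξ Γ = 0`, `(1 − Γ) Ξ (1 − Γ) = 0` and
`Ξ + 𝒥Ξ𝒥 = 0`; (iii) if `Ξ + 𝒥Ξ𝒥 = 0` then `P(Ξ) = P_aux(Ξ)`. -/
theorem stmt8 {H : Type*} [NormedAddCommGroup H] [InnerProductSpace ℂ H] [CompleteSpace H]
    (J : H → H)
    (hJinv : ∀ f : H, J (J f) = f)
    (hJadd : ∀ f g : H, J (f + g) = J f + J g)
    (hJsmul : ∀ (c : ℂ) (f : H), J (c • f) = (starRingEnd ℂ) c • J f)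
    (hJinner : ∀ f g : H, ⟪J f, J g⟫_ℂ = ⟪g, f⟫_ℂ)
    (Jop : (WithLp 2 (H × H) →L[ℂ] WithLp 2 (H × H)) →
      (WithLp 2 (H × H) →L[ℂ] WithLp 2 (H × H)))
    (hJop : ∀ (Ξ : WithLp 2 (H × H) →L[ℂ] WithLp 2 (H × H)) (x : WithLp 2 (H × H)),
      Jop Ξ x = JK J (Ξ (JK J x)))
    (Γ : WithLp 2 (H × H) →L[ℂ] WithLp 2 (H × H))
    (hidem : Γ * Γ = Γ)
    (hblock : Γ + Jop Γ = 1)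
    (Paux P : (WithLp 2 (H × H) →L[ℂ] WithLp 2 (H × H)) →
      (WithLp 2 (H × H) →L[ℂ] WithLp 2 (H × H)))
    (hPaux : ∀ Ξ : WithLp 2 (H × H) →L[ℂ] WithLp 2 (H × H),
      Paux Ξ = Γ * Ξ * (1 - Γ) + (1 - Γ) * Ξ * Γ)
    (hP : ∀ Ξ : WithLp 2 (H × H) →L[ℂ] WithLp 2 (H × H),
      P Ξ = (2⁻¹ : ℂ) • (Paux Ξ - Jop (Paux Ξ))) :
    (∀ Ξ : WithLp 2 (H × H) →L[ℂ] WithLp 2 (H × H), P (P Ξ) = P Ξ) ∧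
    (∀ Ξ : WithLp 2 (H × H) →L[ℂ] WithLp 2 (H × H),
      P Ξ = Ξ ↔ (Γ * Ξ * Γ = 0 ∧ (1 - Γ) * Ξ * (1 - Γ) = 0 ∧ Ξ + Jop Ξ = 0)) ∧
    (∀ Ξ : WithLp 2 (H × H) →L[ℂ] WithLp 2 (H × H), Ξ + Jop Ξ = 0 → P Ξ = Paux Ξ) :=
  stmt8_general J hJinv hJadd hJsmul Jop hJop Γ hidem hblock Paux P hPaux hP
end

section
/- Let γ, α ∈ B(H) with γ* = γ and α* = J α J, and let Γ ∈ B(K) be the operator with blocks (γ, α; J α J, 1 + J γ J), i.e. Γ(f, g) = (γ f + α g, (J α J) f + g + (J γ J) g). Then Γ ∘ 𝒮 ∘ Γ = −Γ if and only if γ² + γ = α ∘ (J α J) and (J α J) ∘ γ = (J γ J) ∘ (J α J). (This is the characterization of generalized one-particle density matrices of bosonic quasifree states: Γ𝒮Γ = −Γ exactly when γ² + γ = α ᾱ and ᾱ γ = γ̄ ᾱ.) -/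
open scoped InnerProductSpace

/-- The operator `𝒮(f, g) = (f, −g)` on `K = H ⊕ H` (as a map). -/
noncomputable def SK {H : Type*} [NegZeroClass H] (x : WithLp 2 (H × H)) :
    WithLp 2 (H × H) :=
  mkK ((WithLp.equiv 2 (H × H)) x).1 (-((WithLp.equiv 2 (H × H)) x).2)

/-- Let `γ, α ∈ B(H)` with `γ* = γ` and `α* = JαJ`, and let `Γ ∈ B(K)` be
the operator with blocks `(γ, α; JαJ, 1 + JγJ)`.  Then `Γ 𝒮 Γ = −Γ` if and only if
`γ² + γ = α ᾱ` and `ᾱ γ = γ̄ ᾱ` (where `ᾱ = JαJ`, `γ̄ = JγJ`). -/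
theorem stmt10 {H : Type*} [NormedAddCommGroup H] [InnerProductSpace ℂ H] [CompleteSpace H]
    (J : H → H)
    (hJinv : ∀ f : H, J (J f) = f)
    (hJadd : ∀ f g : H, J (f + g) = J f + J g)
    (hJsmul : ∀ (c : ℂ) (f : H), J (c • f) = (starRingEnd ℂ) c • J f)
    (hJinner : ∀ f g : H, ⟪J f, J g⟫_ℂ = ⟪g, f⟫_ℂ)
    (γ α aJ gJ : H →L[ℂ] H)
    (haJ : ∀ f : H, aJ f = J (α (J f)))
    (hgJ : ∀ f : H, gJ f = J (γ (J f)))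
    (hγsa : ContinuousLinearMap.adjoint γ = γ)
    (hαsa : ContinuousLinearMap.adjoint α = aJ)
    (Γ : WithLp 2 (H × H) →L[ℂ] WithLp 2 (H × H))
    (hblocks : ∀ f g : H, Γ (mkK f g) = mkK (γ f + α g) (aJ f + (g + gJ g))) :
    (∀ x : WithLp 2 (H × H), Γ (SK (Γ x)) = -(Γ x)) ↔
      (γ * γ + γ = α * aJ ∧ aJ * γ = gJ * aJ) := by
  have mkK_eq : ∀ a b c d : H, mkK a b = mkK c d ↔ a = c ∧ b = d := by
    intro a b c d; simp [mkK, Prod.ext_iff]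
  -- inner product characterizations
  have haJ_inner : ∀ x y : H, ⟪aJ x, y⟫_ℂ = ⟪x, α y⟫_ℂ := by
    intro x y; rw [← hαsa, ContinuousLinearMap.adjoint_inner_left]
  have hgJ_inner : ∀ f g : H, ⟪gJ f, g⟫_ℂ = ⟪f, gJ g⟫_ℂ := by
    intro f g
    rw [hgJ f, hgJ g]
    calc ⟪J (γ (J f)), g⟫_ℂ = ⟪J (γ (J f)), J (J g)⟫_ℂ := by rw [hJinv]
      _ = ⟪J g, γ (J f)⟫_ℂ := hJinner _ _
      _ = ⟪γ (J g), J f⟫_ℂ := by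
          rw [← ContinuousLinearMap.adjoint_inner_left, hγsa]
      _ = ⟪J (J (γ (J g))), J f⟫_ℂ := by rw [hJinv]
      _ = ⟪f, J (γ (J g))⟫_ℂ := hJinner _ _
  constructor
  · intro h
    have key : ∀ f : H, mkK (γ (γ f) + α (-(aJ f))) (aJ (γ f) + (-(aJ f) + gJ (-(aJ f))))
        = mkK (-(γ f)) (-(aJ f)) := by
      intro f
      have h0 := h (mkK f 0)
      rw [hblocks f 0] at h0
      simp only [map_zero, add_zero] at h0
      have hS : SK (mkK (γ f) (aJ f)) = mkK (γ f) (-(aJ f)) := rfl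
      rw [hS, hblocks] at h0
      exact h0
    constructor
    · ext f
      have := ((mkK_eq _ _ _ _).mp (key f)).1
      rw [map_neg] at this
      simp only [ContinuousLinearMap.add_apply, ContinuousLinearMap.mul_apply]
      linear_combination (norm := abel) this
    · ext f
      have := ((mkK_eq _ _ _ _).mp (key f)).2
      rw [map_neg] at this
      simp only [ContinuousLinearMap.mul_apply]
      linear_combination (norm := abel) this
  · rintro ⟨h1, h2⟩
    -- pointwise versions
    have ha : ∀ f : H, γ (γ f) + γ f = α (aJ f) := by
      intro f
      have := congrFun (congrArg DFunLike.coe h1) f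
      simpa [ContinuousLinearMap.mul_apply] using this
    have hb : ∀ f : H, aJ (γ f) = gJ (aJ f) := by
      intro f
      have := congrFun (congrArg DFunLike.coe h2) f
      simpa [ContinuousLinearMap.mul_apply] using this
    have hc : ∀ g : H, γ (α g) = α (gJ g) := by
      intro g
      apply ext_inner_left ℂ
      intro v
      calc ⟪v, γ (α g)⟫_ℂ = ⟪ContinuousLinearMap.adjoint γ v, α g⟫_ℂ := by
            rw [hγsa, ← ContinuousLinearMap.adjoint_inner_left, hγsa]
        _ = ⟪γ v, α g⟫_ℂ := by rw [hγsa]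
        _ = ⟪aJ (γ v), g⟫_ℂ := (haJ_inner _ _).symm
        _ = ⟪gJ (aJ v), g⟫_ℂ := by rw [hb]
        _ = ⟪aJ v, gJ g⟫_ℂ := hgJ_inner _ _
        _ = ⟪v, α (gJ g)⟫_ℂ := haJ_inner _ _
    have hd : ∀ g : H, aJ (α g) = gJ g + gJ (gJ g) := by
      intro g
      have h0 := ha (J g)
      have := congrArg J h0
      rw [hJadd] at this
      have e1 : J (γ (γ (J g))) = gJ (gJ g) := by
        rw [hgJ (gJ g), hgJ g, hJinv]
      have e2 : J (γ (J g)) = gJ g := (hgJ g).symm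
      have e3 : J (α (aJ (J g))) = aJ (α g) := by
        have : aJ (J g) = J (α g) := by rw [haJ, hJinv]
        rw [this, ← haJ]
      rw [e1, e2, e3] at this
      exact this.symm.trans (add_comm _ _)
    intro x
    have hx : x = mkK ((WithLp.equiv 2 (H × H)) x).1 ((WithLp.equiv 2 (H × H)) x).2 := rfl
    set f := ((WithLp.equiv 2 (H × H)) x).1
    set g := ((WithLp.equiv 2 (H × H)) x).2
    rw [hx, hblocks f g]
    have hS : SK (mkK (γ f + α g) (aJ f + (g + gJ g)))
        = mkK (γ f + α g) (-(aJ f + (g + gJ g))) := rfl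
    rw [hS, hblocks]
    have hneg : -(mkK (γ f + α g) (aJ f + (g + gJ g)))
        = mkK (-(γ f + α g)) (-(aJ f + (g + gJ g))) := rfl
    rw [hneg, mkK_eq]
    constructor
    · simp only [map_add, map_neg]
      have := ha f
      have := hc g
      linear_combination (norm := abel) ha f + hc g
    · simp only [map_add, map_neg]
      linear_combination (norm := abel) hb f + hd g
end

section
/- Let α : ℝ³ × ℝ³ → ℂ be measurable and such that for almost every y ∈ ℝ³ the function x ↦ α(x, y) is an H¹ function. Then ∬ |V(x − y)|² |α(x, y)|² dx dy ≤ C² (∬ |α(x, y)|² dx dy + ∬ ‖∇ₓα(x, y)‖² dx dy). (This is the Hilbert–Schmidt bound ‖Π_V(α)‖_{S₂} ≤ C ‖α‖_{H¹} for the operator Π_V(α) with integral kernel V(x − y) α(x, y).) -/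
/-! The form bound is translation invariant: for fixed `y`, substituting `x ↦ x + y` turns
`∫ |V(x - y) f(x)|²` into the form bound for the `H¹` function `f(· + y)`, whose `L²` norms of
function and gradient are those of `f`. Integrating this bound over `y` gives the claim. -/

open MeasureTheory
open scoped ENNReal

/-- A function `f : ℝ³ → ℂ` is an `H¹` function: it is differentiable, square-integrable,
and its (Fréchet) derivative is square-integrable (in operator norm). -/
def IsH1 (f : EuclideanSpace ℝ (Fin 3) → ℂ) : Prop :=
  Differentiable ℝ f ∧
    (∫⁻ x, (‖f x‖₊ : ℝ≥0∞) ^ 2) < ⊤ ∧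
    (∫⁻ x, (‖fderiv ℝ f x‖₊ : ℝ≥0∞) ^ 2) < ⊤

theorem lintegral_nnnorm_sq_comp_add_right {E F : Type*} [MeasurableSpace E] [AddGroup E]
    [MeasurableAdd E] [SeminormedAddCommGroup F] (μ : Measure E) [μ.IsAddRightInvariant]
    (f : E → F) (y : E) :
    ∫⁻ x, (‖f (x + y)‖₊ : ℝ≥0∞) ^ 2 ∂μ = ∫⁻ x, (‖f x‖₊ : ℝ≥0∞) ^ 2 ∂μ :=
  lintegral_add_right_eq_self (fun x => (‖f x‖₊ : ℝ≥0∞) ^ 2) y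

theorem lintegral_nnnorm_fderiv_sq_comp_add_right {E F : Type*} [NormedAddCommGroup E]
    [NormedSpace ℝ E] [MeasurableSpace E] [MeasurableAdd E] [NormedAddCommGroup F]
    [NormedSpace ℝ F] (μ : Measure E) [μ.IsAddRightInvariant] (f : E → F) (y : E) :
    ∫⁻ x, (‖fderiv ℝ (fun x => f (x + y)) x‖₊ : ℝ≥0∞) ^ 2 ∂μ =
      ∫⁻ x, (‖fderiv ℝ f x‖₊ : ℝ≥0∞) ^ 2 ∂μ := by
  simp only [fderiv_comp_add_right]
  exact lintegral_nnnorm_sq_comp_add_right μ (fderiv ℝ f) y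

theorem IsH1.comp_add_right {f : EuclideanSpace ℝ (Fin 3) → ℂ} (hf : IsH1 f)
    (y : EuclideanSpace ℝ (Fin 3)) : IsH1 fun x => f (x + y) :=
  ⟨fun x => (differentiableAt_comp_add_right y).2 (hf.1 (x + y)),
    (lintegral_nnnorm_sq_comp_add_right volume f y).symm ▸ hf.2.1,
    (lintegral_nnnorm_fderiv_sq_comp_add_right volume f y).symm ▸ hf.2.2⟩

theorem lintegral_sq_le_of_form_bound_comp_sub_right (V : EuclideanSpace ℝ (Fin 3) → ℝ) (C : ℝ)
    (hbound : ∀ f : EuclideanSpace ℝ (Fin 3) → ℂ, IsH1 f →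
      (∫⁻ x, (‖V x • f x‖₊ : ℝ≥0∞) ^ 2) ≤
        (ENNReal.ofReal C) ^ 2 *
          ((∫⁻ x, (‖f x‖₊ : ℝ≥0∞) ^ 2) + ∫⁻ x, (‖fderiv ℝ f x‖₊ : ℝ≥0∞) ^ 2))
    {f : EuclideanSpace ℝ (Fin 3) → ℂ} (hf : IsH1 f) (y : EuclideanSpace ℝ (Fin 3)) :
    (∫⁻ x, (‖V (x - y) • f x‖₊ : ℝ≥0∞) ^ 2) ≤
      (ENNReal.ofReal C) ^ 2 *
        ((∫⁻ x, (‖f x‖₊ : ℝ≥0∞) ^ 2) + ∫⁻ x, (‖fderiv ℝ f x‖₊ : ℝ≥0∞) ^ 2) :=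
  calc (∫⁻ x, (‖V (x - y) • f x‖₊ : ℝ≥0∞) ^ 2)
      = ∫⁻ x, (‖V x • f (x + y)‖₊ : ℝ≥0∞) ^ 2 := by
        simpa only [add_sub_cancel_right] using
          (lintegral_add_right_eq_self (fun x => (‖V (x - y) • f x‖₊ : ℝ≥0∞) ^ 2) y).symm
    _ ≤ (ENNReal.ofReal C) ^ 2 * ((∫⁻ x, (‖f (x + y)‖₊ : ℝ≥0∞) ^ 2)
          + ∫⁻ x, (‖fderiv ℝ (fun x => f (x + y)) x‖₊ : ℝ≥0∞) ^ 2) := hbound _ (hf.comp_add_right y)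
    _ = (ENNReal.ofReal C) ^ 2 * ((∫⁻ x, (‖f x‖₊ : ℝ≥0∞) ^ 2)
          + ∫⁻ x, (‖fderiv ℝ f x‖₊ : ℝ≥0∞) ^ 2) := by
        rw [lintegral_nnnorm_sq_comp_add_right, lintegral_nnnorm_fderiv_sq_comp_add_right]

theorem stmt14_general (V : EuclideanSpace ℝ (Fin 3) → ℝ)
    (C : ℝ)
    (hbound : ∀ f : EuclideanSpace ℝ (Fin 3) → ℂ, IsH1 f →
      (∫⁻ x, (‖V x • f x‖₊ : ℝ≥0∞) ^ 2) ≤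
        (ENNReal.ofReal C) ^ 2 *
          ((∫⁻ x, (‖f x‖₊ : ℝ≥0∞) ^ 2) + ∫⁻ x, (‖fderiv ℝ f x‖₊ : ℝ≥0∞) ^ 2))
    (α : EuclideanSpace ℝ (Fin 3) × EuclideanSpace ℝ (Fin 3) → ℂ) (hα : Measurable α)
    (hαH1 : ∀ᵐ y : EuclideanSpace ℝ (Fin 3), IsH1 fun x => α (x, y)) :
    (∫⁻ y, ∫⁻ x, (‖V (x - y) • α (x, y)‖₊ : ℝ≥0∞) ^ 2) ≤
      (ENNReal.ofReal C) ^ 2 *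
        ((∫⁻ y, ∫⁻ x, (‖α (x, y)‖₊ : ℝ≥0∞) ^ 2) +
          ∫⁻ y, ∫⁻ x, (‖fderiv ℝ (fun x => α (x, y)) x‖₊ : ℝ≥0∞) ^ 2) := by
  have hL2_meas : Measurable fun y => ∫⁻ x, (‖α (x, y)‖₊ : ℝ≥0∞) ^ 2 :=
    (hα.nnnorm.coe_nnreal_ennreal.pow_const 2).lintegral_prod_left'
  rw [← lintegral_add_left' hL2_meas.aemeasurable,
    ← lintegral_const_mul' _ _ (ENNReal.pow_ne_top ENNReal.ofReal_ne_top)]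
  refine lintegral_mono_ae ?_
  filter_upwards [hαH1] with y hy
  exact lintegral_sq_le_of_form_bound_comp_sub_right V C hbound hy y

/-- Assume the form bound `V² ≤ C²(1 − Δ)`.  Let `α : ℝ³ × ℝ³ → ℂ` be
measurable and such that for a.e. `y` the function `x ↦ α(x, y)` is `H¹`.  Then
`∬ |V(x − y)|² |α(x, y)|² dx dy ≤ C² (∬ |α|² + ∬ ‖∇ₓα‖²)`, i.e. the Hilbert–Schmidt bound
`‖Π_V(α)‖_{S₂} ≤ C ‖α‖_{H¹}`. -/
theorem stmt14 (V : EuclideanSpace ℝ (Fin 3) → ℝ) (hV : Measurable V)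
    (C : ℝ) (hC : 0 ≤ C)
    (hbound : ∀ f : EuclideanSpace ℝ (Fin 3) → ℂ, IsH1 f →
      (∫⁻ x, (‖V x • f x‖₊ : ℝ≥0∞) ^ 2) ≤
        (ENNReal.ofReal C) ^ 2 *
          ((∫⁻ x, (‖f x‖₊ : ℝ≥0∞) ^ 2) + ∫⁻ x, (‖fderiv ℝ f x‖₊ : ℝ≥0∞) ^ 2))
    (α : EuclideanSpace ℝ (Fin 3) × EuclideanSpace ℝ (Fin 3) → ℂ) (hα : Measurable α)
    (hαH1 : ∀ᵐ y : EuclideanSpace ℝ (Fin 3), IsH1 fun x => α (x, y)) :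
    (∫⁻ y, ∫⁻ x, (‖V (x - y) • α (x, y)‖₊ : ℝ≥0∞) ^ 2) ≤
      (ENNReal.ofReal C) ^ 2 *
        ((∫⁻ y, ∫⁻ x, (‖α (x, y)‖₊ : ℝ≥0∞) ^ 2) +
          ∫⁻ y, ∫⁻ x, (‖fderiv ℝ (fun x => α (x, y)) x‖₊ : ℝ≥0∞) ^ 2) :=
  stmt14_general V C hbound α hα hαH1
end

section
/- Let ρ : ℝ³ → ℂ be integrable and let f : ℝ³ → ℂ be an H¹ function. Then ∫ (∫ |V(x − y)| |ρ(y)| dy)² |f(x)|² dx ≤ C² (∫ |ρ(y)| dy)² (∫ |f(x)|² dx + ∫ ‖∇f(x)‖² dx). (This is the operator bound ‖(V ∗ ρ) M^{−1}‖ ≤ C ‖ρ‖_{L¹} on the multiplication operator by the convolution V ∗ ρ composed with M^{−1} = (1 − Δ)^{−1/2}.) -/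
/-!
Weighting Cauchy–Schwarz by `|ρ|` gives
`(∫ |V(x - y)| |ρ(y)| dy)² ≤ ‖ρ‖₁ ∫ |V(x - y)|² |ρ(y)| dy`.
Integrating against `|f(x)|²` and exchanging the integrals (Tonelli) leaves, for each `y`,
`∫ |V(x)|² |f(x + y)|² dx`, which the form bound controls by `C² ‖f‖²_{H¹}` because
translation preserves the `H¹` norm.
-/

open MeasureTheory
open scoped ENNReal

theorem ENNReal.lintegral_mul_sq_le_lintegral_sq_mul_mul_lintegral {α : Type*}
    [MeasurableSpace α] (μ : Measure α) {g w : α → ℝ≥0∞} (hg : AEMeasurable g μ)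
    (hw : AEMeasurable w μ) :
    (∫⁻ a, g a * w a ∂μ) ^ 2 ≤ (∫⁻ a, g a ^ 2 * w a ∂μ) * ∫⁻ a, w a ∂μ := by
  have hsqrt : ∀ a : ℝ≥0∞, (a ^ (2⁻¹ : ℝ)) ^ 2 = a := ENNReal.rpow_inv_natCast_pow two_ne_zero
  -- Cauchy–Schwarz applied to `g √w` and `√w`
  have hCS := ENNReal.lintegral_mul_le_Lp_mul_Lq μ Real.HolderConjugate.two_two
    (hg.mul (hw.pow_const (2⁻¹ : ℝ))) (hw.pow_const (2⁻¹ : ℝ))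
  simp only [Pi.mul_apply, mul_assoc, ENNReal.rpow_two, mul_pow, ← sq, hsqrt,
    one_div] at hCS
  calc (∫⁻ a, g a * w a ∂μ) ^ 2
      ≤ ((∫⁻ a, g a ^ 2 * w a ∂μ) ^ (2⁻¹ : ℝ) * (∫⁻ a, w a ∂μ) ^ (2⁻¹ : ℝ)) ^ 2 :=
        pow_le_pow_left' hCS 2
    _ = (∫⁻ a, g a ^ 2 * w a ∂μ) * ∫⁻ a, w a ∂μ := by rw [mul_pow, hsqrt, hsqrt]

theorem lintegral_sq_lintegral_comp_sub_mul_mul_le {G : Type*} [MeasurableSpace G] [AddGroup G]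
    [MeasurableAdd G] [MeasurableSub₂ G] (μ : Measure G) [SFinite μ] [μ.IsAddRightInvariant]
    {W r g : G → ℝ≥0∞} (hW : Measurable W) (hr : Measurable r) (hg : Measurable g)
    {K : ℝ≥0∞} (hK : ∀ y, ∫⁻ x, W x ^ 2 * g (x + y) ∂μ ≤ K) :
    ∫⁻ x, (∫⁻ y, W (x - y) * r y ∂μ) ^ 2 * g x ∂μ ≤ K * (∫⁻ y, r y ∂μ) ^ 2 := by
  set N := ∫⁻ y, r y ∂μ
  have hWsub : Measurable fun p : G × G => W (p.1 - p.2) ^ 2 := (hW.comp measurable_sub).pow_const 2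
  have hWsub_r : Measurable fun p : G × G => W (p.1 - p.2) ^ 2 * r p.2 :=
    hWsub.mul (hr.comp measurable_snd)
  have hF : Measurable (Function.uncurry fun x y => W (x - y) ^ 2 * r y * g x) :=
    hWsub_r.mul (hg.comp measurable_fst)
  have hWsub_r_slice : ∀ x, Measurable fun y => W (x - y) ^ 2 * r y := fun x =>
    hWsub_r.comp measurable_prodMk_left
  have hWsub_g_slice : ∀ y, Measurable fun x => W (x - y) ^ 2 * g x := fun y =>
    (hWsub.comp measurable_prodMk_right).mul hg
  have hK' : ∀ y, ∫⁻ x, W (x - y) ^ 2 * g x ∂μ ≤ K := fun y => by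
    have h := lintegral_add_right_eq_self (μ := μ) (fun x => W (x - y) ^ 2 * g x) y
    simp only [add_sub_cancel_right] at h
    exact h ▸ hK y
  calc ∫⁻ x, (∫⁻ y, W (x - y) * r y ∂μ) ^ 2 * g x ∂μ
      ≤ ∫⁻ x, (∫⁻ y, W (x - y) ^ 2 * r y ∂μ) * N * g x ∂μ := by
        gcongr with x
        exact ENNReal.lintegral_mul_sq_le_lintegral_sq_mul_mul_lintegral μ
          (hW.comp (measurable_const.sub measurable_id)).aemeasurable hr.aemeasurable
    _ = N * ∫⁻ x, ∫⁻ y, W (x - y) ^ 2 * r y * g x ∂μ ∂μ := by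
        rw [← lintegral_const_mul]
        · refine lintegral_congr fun x => ?_
          rw [lintegral_mul_const _ (hWsub_r_slice x)]
          ring
        · exact hF.lintegral_prod_right'
    _ = N * ∫⁻ y, r y * ∫⁻ x, W (x - y) ^ 2 * g x ∂μ ∂μ := by
        rw [lintegral_lintegral_swap hF.aemeasurable]
        congr 1
        refine lintegral_congr fun y => ?_
        rw [← lintegral_const_mul _ (hWsub_g_slice y)]
        exact lintegral_congr fun x => by ring
    _ ≤ N * ∫⁻ y, r y * K ∂μ := by gcongr with y; exact hK' y
    _ = K * N ^ 2 := by rw [lintegral_mul_const _ hr]; ring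

theorem lintegral_nnnorm_fderiv_comp_add_right_sq {E F : Type*} [NormedAddCommGroup E]
    [NormedSpace ℝ E] [MeasurableSpace E] [MeasurableAdd E] [NormedAddCommGroup F]
    [NormedSpace ℝ F] (μ : Measure E) [μ.IsAddRightInvariant] (f : E → F) (y : E) :
    ∫⁻ x, (‖fderiv ℝ (fun z => f (z + y)) x‖₊ : ℝ≥0∞) ^ 2 ∂μ =
      ∫⁻ x, (‖fderiv ℝ f x‖₊ : ℝ≥0∞) ^ 2 ∂μ := by
  simp_rw [fderiv_comp_add_right]
  exact lintegral_add_right_eq_self (fun x => (‖fderiv ℝ f x‖₊ : ℝ≥0∞) ^ 2) y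

def FormBounded (V : EuclideanSpace ℝ (Fin 3) → ℝ) (C : ℝ) : Prop :=
  ∀ f : EuclideanSpace ℝ (Fin 3) → ℂ, IsH1 f →
    (∫⁻ x, (‖V x • f x‖₊ : ℝ≥0∞) ^ 2) ≤
      (ENNReal.ofReal C) ^ 2 *
        ((∫⁻ x, (‖f x‖₊ : ℝ≥0∞) ^ 2) + ∫⁻ x, (‖fderiv ℝ f x‖₊ : ℝ≥0∞) ^ 2)

theorem FormBounded.lintegral_sq_mul_comp_add_right_le {V : EuclideanSpace ℝ (Fin 3) → ℝ}
    {C : ℝ} (hVC : FormBounded V C) {f : EuclideanSpace ℝ (Fin 3) → ℂ} (hf : IsH1 f)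
    (y : EuclideanSpace ℝ (Fin 3)) :
    ∫⁻ x, (‖V x‖₊ : ℝ≥0∞) ^ 2 * (‖f (x + y)‖₊ : ℝ≥0∞) ^ 2 ≤
      (ENNReal.ofReal C) ^ 2 *
        ((∫⁻ x, (‖f x‖₊ : ℝ≥0∞) ^ 2) + ∫⁻ x, (‖fderiv ℝ f x‖₊ : ℝ≥0∞) ^ 2) := by
  have h := hVC _ (hf.comp_add_right y)
  simpa only [nnnorm_smul, ENNReal.coe_mul, mul_pow, lintegral_nnnorm_fderiv_comp_add_right_sq,
    lintegral_add_right_eq_self (fun x => (‖f x‖₊ : ℝ≥0∞) ^ 2) y] using h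

theorem stmt15_general (V : EuclideanSpace ℝ (Fin 3) → ℝ) (hV : Measurable V)
    (C : ℝ)
    (hbound : ∀ f : EuclideanSpace ℝ (Fin 3) → ℂ, IsH1 f →
      (∫⁻ x, (‖V x • f x‖₊ : ℝ≥0∞) ^ 2) ≤
        (ENNReal.ofReal C) ^ 2 *
          ((∫⁻ x, (‖f x‖₊ : ℝ≥0∞) ^ 2) + ∫⁻ x, (‖fderiv ℝ f x‖₊ : ℝ≥0∞) ^ 2))
    (ρ : EuclideanSpace ℝ (Fin 3) → ℂ) (hρ : Integrable ρ)
    (f : EuclideanSpace ℝ (Fin 3) → ℂ) (hf : IsH1 f) :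
    (∫⁻ x, (∫⁻ y, (‖V (x - y)‖₊ : ℝ≥0∞) * (‖ρ y‖₊ : ℝ≥0∞)) ^ 2 * (‖f x‖₊ : ℝ≥0∞) ^ 2) ≤
      (ENNReal.ofReal C) ^ 2 * (∫⁻ y, (‖ρ y‖₊ : ℝ≥0∞)) ^ 2 *
        ((∫⁻ x, (‖f x‖₊ : ℝ≥0∞) ^ 2) + ∫⁻ x, (‖fderiv ℝ f x‖₊ : ℝ≥0∞) ^ 2) := by
  obtain ⟨ρ', hρ'_meas, hρρ'⟩ := hρ.aemeasurable
  have hρ_norm : ∀ W : EuclideanSpace ℝ (Fin 3) → ℝ≥0∞,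
      ∫⁻ y, W y * ‖ρ y‖₊ = ∫⁻ y, W y * ‖ρ' y‖₊ := fun W =>
    lintegral_congr_ae (hρρ'.mono fun y hy => by simp only [hy])
  have hρ_L1 : ∫⁻ y, (‖ρ y‖₊ : ℝ≥0∞) = ∫⁻ y, ‖ρ' y‖₊ :=
    lintegral_congr_ae (hρρ'.mono fun y hy => by simp only [hy])
  rw [hρ_L1]
  simp_rw [hρ_norm]
  calc _ ≤ _ := lintegral_sq_lintegral_comp_sub_mul_mul_le volume
          hV.nnnorm.coe_nnreal_ennreal hρ'_meas.nnnorm.coe_nnreal_ennreal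
          (hf.1.continuous.measurable.nnnorm.coe_nnreal_ennreal.pow_const 2)
          (FormBounded.lintegral_sq_mul_comp_add_right_le hbound hf)
    _ = _ := by ring

/-- Assume the form bound `V² ≤ C²(1 − Δ)`.  Let `ρ : ℝ³ → ℂ` be
integrable and `f : ℝ³ → ℂ` an `H¹` function.  Then
`∫ (∫ |V(x − y)| |ρ(y)| dy)² |f(x)|² dx ≤ C² (∫ |ρ|)² (∫ |f|² + ∫ ‖∇f‖²)`, i.e. the
operator bound `‖(V ∗ ρ) M⁻¹‖ ≤ C ‖ρ‖_{L¹}`. -/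
theorem stmt15 (V : EuclideanSpace ℝ (Fin 3) → ℝ) (hV : Measurable V)
    (C : ℝ) (hC : 0 ≤ C)
    (hbound : ∀ f : EuclideanSpace ℝ (Fin 3) → ℂ, IsH1 f →
      (∫⁻ x, (‖V x • f x‖₊ : ℝ≥0∞) ^ 2) ≤
        (ENNReal.ofReal C) ^ 2 *
          ((∫⁻ x, (‖f x‖₊ : ℝ≥0∞) ^ 2) + ∫⁻ x, (‖fderiv ℝ f x‖₊ : ℝ≥0∞) ^ 2))
    (ρ : EuclideanSpace ℝ (Fin 3) → ℂ) (hρ : Integrable ρ)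
    (f : EuclideanSpace ℝ (Fin 3) → ℂ) (hf : IsH1 f) :
    (∫⁻ x, (∫⁻ y, (‖V (x - y)‖₊ : ℝ≥0∞) * (‖ρ y‖₊ : ℝ≥0∞)) ^ 2 * (‖f x‖₊ : ℝ≥0∞) ^ 2) ≤
      (ENNReal.ofReal C) ^ 2 * (∫⁻ y, (‖ρ y‖₊ : ℝ≥0∞)) ^ 2 *
        ((∫⁻ x, (‖f x‖₊ : ℝ≥0∞) ^ 2) + ∫⁻ x, (‖fderiv ℝ f x‖₊ : ℝ≥0∞) ^ 2) :=
  stmt15_general V hV C hbound ρ hρ f hf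
end

section
/- There exists a constant C₃ > 0, depending only on the dimension 3, with the following property: whenever V : ℝ³ → ℝ is measurable and C ≥ 0 is such that for every H¹ function f : ℝ³ → ℂ one has ∫ |V(x) f(x)|² dx ≤ C² (∫ |f(x)|² dx + ∫ ‖∇f(x)‖² dx), then for every x₀ ∈ ℝ³ and every R ≥ 1, ∫_{B(x₀, R)} |V(x)|² dx ≤ C₃ C² R³, where B(x₀, R) is the closed ball of radius R centered at x₀. (In particular the form bound V² ≤ C²(1 − Δ) forces V to be locally square-integrable.) -/
/-!
Test the form bound against the Gaussian `f x = exp (-‖x - x₀‖² / R²)`. On the ball `B(x₀, R)`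
we have `e * |f| ≥ 1`, so `∫_B V² ≤ e² ∫ V² |f|²`. The Gaussian integral gives
`∫ |f|² = (π R² / 2)^(3/2)`, and `|∇f|² = 4 s e^{-s} f / R²` with `s = ‖x - x₀‖² / R²`, where
`s e^{-s} ≤ 1`, so `∫ |∇f|² ≤ 4 π^(3/2) R`. For `R ≥ 1` both are `O(R³)`.
-/

open MeasureTheory Real Module Metric
open scoped ENNReal

theorem div_inv_sq_rpow_natCast_div_two {c R : ℝ} (hc : 0 ≤ c) (hR : 0 ≤ R) (n : ℕ) :
    (c / (R ^ 2)⁻¹) ^ (n / 2 : ℝ) = c ^ (n / 2 : ℝ) * R ^ n := by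
  rw [div_inv_eq_mul, mul_rpow hc (by positivity), ← rpow_natCast R 2, ← rpow_mul hR,
    ← rpow_natCast R n]
  congr 2
  push_cast
  ring

theorem setLIntegral_enorm_sq_le_of_one_le_mul_norm {α E : Type*} [MeasurableSpace α]
    {μ : Measure α} [NormedAddCommGroup E] [NormedSpace ℝ E] {s : Set α} (hs : MeasurableSet s)
    {V : α → ℝ} {f : α → E} {c : ℝ} (h : ∀ x ∈ s, 1 ≤ c * ‖f x‖) :
    ∫⁻ x in s, ‖V x‖ₑ ^ 2 ∂μ ≤ ENNReal.ofReal c ^ 2 * ∫⁻ x, ‖V x • f x‖ₑ ^ 2 ∂μ := by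
  calc ∫⁻ x in s, ‖V x‖ₑ ^ 2 ∂μ ≤ ∫⁻ x in s, ENNReal.ofReal c ^ 2 * ‖V x • f x‖ₑ ^ 2 ∂μ := by
        refine setLIntegral_mono' hs fun x hx ↦ ?_
        have hc : 0 ≤ c := by
          by_contra! hc
          linarith [mul_nonpos_of_nonpos_of_nonneg hc.le (norm_nonneg (f x)), h x hx]
        rw [← mul_pow, ← ofReal_norm, ← ofReal_norm, ← ENNReal.ofReal_mul hc, norm_smul]
        gcongr
        nlinarith [h x hx, norm_nonneg (V x)]
    _ ≤ ∫⁻ x, ENNReal.ofReal c ^ 2 * ‖V x • f x‖ₑ ^ 2 ∂μ := setLIntegral_le_lintegral _ _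
    _ = ENNReal.ofReal c ^ 2 * ∫⁻ x, ‖V x • f x‖ₑ ^ 2 ∂μ := lintegral_const_mul' _ _ (by finiteness)

section Gaussian

variable {E : Type*} [NormedAddCommGroup E]

noncomputable def gaussianBump (a : ℝ) (x₀ x : E) : ℂ := rexp (-a * ‖x - x₀‖ ^ 2)

theorem norm_gaussianBump (a : ℝ) (x₀ x : E) :
    ‖gaussianBump a x₀ x‖ = rexp (-a * ‖x - x₀‖ ^ 2) := by
  rw [gaussianBump, Complex.norm_real, norm_of_nonneg (exp_pos _).le]

theorem one_le_exp_one_mul_norm_gaussianBump {R : ℝ} {x₀ x : E} (hx : x ∈ closedBall x₀ R) :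
    1 ≤ rexp 1 * ‖gaussianBump (R ^ 2)⁻¹ x₀ x‖ := by
  rw [norm_gaussianBump, ← exp_add, neg_mul, inv_mul_eq_div]
  have : ‖x - x₀‖ ^ 2 / R ^ 2 ≤ 1 :=
    div_le_one_of_le₀ (pow_le_pow_left₀ (norm_nonneg _) (mem_closedBall_iff_norm.1 hx) 2)
      (sq_nonneg R)
  exact one_le_exp (by linarith)

variable [InnerProductSpace ℝ E]

theorem hasFDerivAt_gaussianBump (a : ℝ) (x₀ x : E) :
    HasFDerivAt (gaussianBump a x₀)
      (Complex.ofRealCLM.comp ((-2 * a * rexp (-a * ‖x - x₀‖ ^ 2)) • innerSL ℝ (x - x₀))) x := by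
  have := (((hasFDerivAt_id x).sub_const x₀).norm_sq.const_mul (-a)).exp
  refine (Complex.ofRealCLM.hasFDerivAt.comp x this).congr_fderiv ?_
  ext v
  simp
  ring

theorem differentiable_gaussianBump (a : ℝ) (x₀ : E) : Differentiable ℝ (gaussianBump a x₀) :=
  fun x ↦ (hasFDerivAt_gaussianBump a x₀ x).differentiableAt

theorem norm_fderiv_gaussianBump {a : ℝ} (ha : 0 ≤ a) (x₀ x : E) :
    ‖fderiv ℝ (gaussianBump a x₀) x‖ = 2 * a * ‖x - x₀‖ * rexp (-a * ‖x - x₀‖ ^ 2) := by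
  rw [(hasFDerivAt_gaussianBump a x₀ x).fderiv,
    show Complex.ofRealCLM = Complex.ofRealLI.toContinuousLinearMap from rfl,
    Complex.ofRealLI.norm_toContinuousLinearMap_comp, norm_smul, innerSL_apply_norm,
    norm_eq_abs, abs_of_nonpos (by nlinarith [exp_pos (-a * ‖x - x₀‖ ^ 2)])]
  ring

theorem norm_fderiv_gaussianBump_sq_le {a : ℝ} (ha : 0 ≤ a) (x₀ x : E) :
    ‖fderiv ℝ (gaussianBump a x₀) x‖ ^ 2 ≤ 4 * a * rexp (-a * ‖x - x₀‖ ^ 2) := by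
  have hmax : a * ‖x - x₀‖ ^ 2 * rexp (-(a * ‖x - x₀‖ ^ 2)) ≤ 1 :=
    (mul_exp_neg_le_exp_neg_one _).trans (exp_le_one_iff.2 (by norm_num))
  rw [norm_fderiv_gaussianBump ha]
  calc (2 * a * ‖x - x₀‖ * rexp (-a * ‖x - x₀‖ ^ 2)) ^ 2
      = 4 * a * (a * ‖x - x₀‖ ^ 2 * rexp (-(a * ‖x - x₀‖ ^ 2))) * rexp (-a * ‖x - x₀‖ ^ 2) := by
        rw [neg_mul]; ring
    _ ≤ 4 * a * 1 * rexp (-a * ‖x - x₀‖ ^ 2) := by gcongr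
    _ = 4 * a * rexp (-a * ‖x - x₀‖ ^ 2) := by ring

variable [FiniteDimensional ℝ E] [MeasurableSpace E] [BorelSpace E]

theorem lintegral_exp_neg_mul_norm_sub_sq {b : ℝ} (hb : 0 < b) (x₀ : E) :
    ∫⁻ x, ENNReal.ofReal (rexp (-b * ‖x - x₀‖ ^ 2)) =
      ENNReal.ofReal ((π / b) ^ (finrank ℝ E / 2 : ℝ)) := by
  rw [lintegral_sub_right_eq_self (fun x ↦ ENNReal.ofReal (rexp (-b * ‖x‖ ^ 2))) x₀,
    ← GaussianFourier.integral_rexp_neg_mul_sq_norm hb]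
  refine (ofReal_integral_eq_lintegral_ofReal (Integrable.of_integral_ne_zero ?_)
    (.of_forall fun x ↦ (exp_pos _).le)).symm
  rw [GaussianFourier.integral_rexp_neg_mul_sq_norm hb]
  exact (rpow_pos_of_pos (div_pos pi_pos hb) _).ne'

theorem lintegral_enorm_gaussianBump_sq {a : ℝ} (ha : 0 < a) (x₀ : E) :
    ∫⁻ x, ‖gaussianBump a x₀ x‖ₑ ^ 2 = ENNReal.ofReal ((π / (2 * a)) ^ (finrank ℝ E / 2 : ℝ)) := by
  rw [← lintegral_exp_neg_mul_norm_sub_sq (by positivity) x₀]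
  congr 1 with x
  rw [← ofReal_norm, ← ENNReal.ofReal_pow (norm_nonneg _), norm_gaussianBump, sq, ← exp_add]
  ring_nf

theorem lintegral_enorm_fderiv_gaussianBump_sq_le {a : ℝ} (ha : 0 < a) (x₀ : E) :
    ∫⁻ x, ‖fderiv ℝ (gaussianBump a x₀) x‖ₑ ^ 2 ≤
      ENNReal.ofReal (4 * a) * ENNReal.ofReal ((π / a) ^ (finrank ℝ E / 2 : ℝ)) := by
  calc ∫⁻ x, ‖fderiv ℝ (gaussianBump a x₀) x‖ₑ ^ 2
      ≤ ∫⁻ x, ENNReal.ofReal (4 * a) * ENNReal.ofReal (rexp (-a * ‖x - x₀‖ ^ 2)) := by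
        refine lintegral_mono fun x ↦ ?_
        rw [← ofReal_norm, ← ENNReal.ofReal_pow (norm_nonneg _),
          ← ENNReal.ofReal_mul (by positivity)]
        exact ENNReal.ofReal_le_ofReal (norm_fderiv_gaussianBump_sq_le ha.le x₀ x)
    _ = _ := by
        rw [lintegral_const_mul' _ _ ENNReal.ofReal_ne_top, lintegral_exp_neg_mul_norm_sub_sq ha]

theorem lintegral_gaussianBump_energy_le {R : ℝ} (hR : 1 ≤ R) (x₀ : E) :
    (∫⁻ x, ‖gaussianBump (R ^ 2)⁻¹ x₀ x‖ₑ ^ 2) +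
        ∫⁻ x, ‖fderiv ℝ (gaussianBump (R ^ 2)⁻¹ x₀) x‖ₑ ^ 2 ≤
      ENNReal.ofReal (((π / 2) ^ (finrank ℝ E / 2 : ℝ) + 4 * π ^ (finrank ℝ E / 2 : ℝ)) *
        R ^ finrank ℝ E) := by
  have ha : 0 < (R ^ 2)⁻¹ := by positivity
  have ha1 : (R ^ 2)⁻¹ ≤ 1 := inv_le_one_of_one_le₀ (one_le_pow₀ hR)
  rw [lintegral_enorm_gaussianBump_sq ha x₀]
  grw [lintegral_enorm_fderiv_gaussianBump_sq_le ha x₀]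
  rw [← ENNReal.ofReal_mul (by positivity), ← ENNReal.ofReal_add (by positivity) (by positivity)]
  refine ENNReal.ofReal_le_ofReal ?_
  rw [div_mul_eq_div_div, div_inv_sq_rpow_natCast_div_two (by positivity) (by positivity),
    div_inv_sq_rpow_natCast_div_two pi_pos.le (by positivity)]
  calc (π / 2) ^ (finrank ℝ E / 2 : ℝ) * R ^ finrank ℝ E +
        4 * (R ^ 2)⁻¹ * (π ^ (finrank ℝ E / 2 : ℝ) * R ^ finrank ℝ E)
      ≤ (π / 2) ^ (finrank ℝ E / 2 : ℝ) * R ^ finrank ℝ E +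
        4 * 1 * (π ^ (finrank ℝ E / 2 : ℝ) * R ^ finrank ℝ E) := by gcongr
    _ = _ := by ring

end Gaussian

theorem isH1_gaussianBump {a : ℝ} (ha : 0 < a) (x₀ : EuclideanSpace ℝ (Fin 3)) :
    IsH1 (gaussianBump a x₀) :=
  ⟨differentiable_gaussianBump a x₀,
    (lintegral_enorm_gaussianBump_sq ha x₀).trans_lt ENNReal.ofReal_lt_top,
    (lintegral_enorm_fderiv_gaussianBump_sq_le ha x₀).trans_lt (by finiteness)⟩

/-- There is a constant `C₃ > 0`, depending only on the dimension `3`,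
such that whenever `V : ℝ³ → ℝ` is measurable and `C ≥ 0` satisfies the form bound
`V² ≤ C²(1 − Δ)` (tested against all `H¹` functions), then for every center `x₀` and every
radius `R ≥ 1` one has `∫_{B(x₀,R)} |V|² ≤ C₃ C² R³`; in particular `V ∈ L²_loc`. -/
theorem stmt18 :
    ∃ C₃ : ℝ, 0 < C₃ ∧
      ∀ (V : EuclideanSpace ℝ (Fin 3) → ℝ), Measurable V →
      ∀ C : ℝ, 0 ≤ C →
      (∀ f : EuclideanSpace ℝ (Fin 3) → ℂ, IsH1 f →
        (∫⁻ x, (‖V x • f x‖₊ : ℝ≥0∞) ^ 2) ≤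
          (ENNReal.ofReal C) ^ 2 *
            ((∫⁻ x, (‖f x‖₊ : ℝ≥0∞) ^ 2) + ∫⁻ x, (‖fderiv ℝ f x‖₊ : ℝ≥0∞) ^ 2)) →
      ∀ (x₀ : EuclideanSpace ℝ (Fin 3)) (R : ℝ), 1 ≤ R →
        (∫⁻ x in Metric.closedBall x₀ R, (‖V x‖₊ : ℝ≥0∞) ^ 2) ≤
          ENNReal.ofReal (C₃ * C ^ 2 * R ^ 3) := by
  set K : ℝ := (π / 2) ^ (3 / 2 : ℝ) + 4 * π ^ (3 / 2 : ℝ)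
  refine ⟨rexp 1 ^ 2 * K, by positivity, fun V _ C hC hform x₀ R hR ↦ ?_⟩
  set f := gaussianBump (R ^ 2)⁻¹ x₀
  have henergy := lintegral_gaussianBump_energy_le hR x₀
  rw [finrank_euclideanSpace_fin, Nat.cast_ofNat] at henergy
  calc ∫⁻ x in closedBall x₀ R, ‖V x‖ₑ ^ 2
      ≤ ENNReal.ofReal (rexp 1) ^ 2 * ∫⁻ x, ‖V x • f x‖ₑ ^ 2 :=
        setLIntegral_enorm_sq_le_of_one_le_mul_norm measurableSet_closedBall
          fun x hx ↦ one_le_exp_one_mul_norm_gaussianBump hx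
    _ ≤ ENNReal.ofReal (rexp 1) ^ 2 * (ENNReal.ofReal C ^ 2 * ENNReal.ofReal (K * R ^ 3)) := by
        gcongr
        exact (hform f (isH1_gaussianBump (by positivity) x₀)).trans (by gcongr; exact henergy)
    _ = ENNReal.ofReal (rexp 1 ^ 2 * K * C ^ 2 * R ^ 3) := by
        rw [← ENNReal.ofReal_pow (exp_pos 1).le, ← ENNReal.ofReal_pow hC,
          ← ENNReal.ofReal_mul (by positivity), ← ENNReal.ofReal_mul (by positivity)]
        ring_nf
end
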